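/- Let H be a Hilbert space, D a dense subset of H, and (U_n) a sequence of unitary operators on H such that for all φ, ψ ∈ D, ⟨φ, (1 - U_n* U_m) ψ⟩ → 0 and ⟨φ, (1 - U_n U_m*) ψ⟩ → 0 as min(n,m) → ∞. Then there exists a unitary operator U on H such that U_n → U in the strong operator topology. -/

import Mathlib

/-!
For `ψ ∈ D` the hypothesis with `φ = ψ` says `⟪U_m ψ, U_n ψ⟫ → ‖ψ‖²`, hence
`‖U_m ψ - U_n ψ‖² = 2‖ψ‖² - 2 Re ⟪U_m ψ, U_n ψ⟫ → 0`: the sequence `U_n ψ` is Cauchy.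
Since the `U_n` are isometries this extends from the dense set `D` to all of `H`; by
Banach–Steinhaus the pointwise limit is a bounded operator `U₀`, again an isometry. The same
argument applied to the unitaries `U_n*` gives an isometric strong limit of the adjoints, which
must be `U₀*`; an operator that is isometric together with its adjoint is unitary.
-/

open Filter Topology ContinuousLinearMap
open scoped InnerProductSpace

theorem cauchySeq_apply_of_dense {X Y : Type*} [PseudoMetricSpace X] [PseudoMetricSpace Y]
    {V : ℕ → X → Y} (hV : ∀ n, LipschitzWith 1 (V n)) {D : Set X} (hD : Dense D)
    (hC : ∀ x ∈ D, CauchySeq fun n => V n x) (x : X) : CauchySeq fun n => V n x := by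
  rw [Metric.cauchySeq_iff]
  intro ε hε
  obtain ⟨y, hyD, hxy⟩ := hD.exists_dist_lt x (by positivity : 0 < ε / 3)
  obtain ⟨N, hN⟩ := Metric.cauchySeq_iff.mp (hC y hyD) (ε / 3) (by positivity)
  have hclose : ∀ n, dist (V n x) (V n y) < ε / 3 := fun n =>
    ((hV n).dist_le_mul x y).trans_lt (by simpa using hxy)
  refine ⟨N, fun m hm n hn => ?_⟩
  calc dist (V m x) (V n x)
      ≤ dist (V m x) (V m y) + dist (V m y) (V n y) + dist (V n y) (V n x) :=
        dist_triangle4 _ _ _ _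
    _ < ε / 3 + ε / 3 + ε / 3 := by
        gcongr
        · exact hclose m
        · exact hN m hm n hn
        · rw [dist_comm]; exact hclose n
    _ = ε := by ring

section InnerProductSpace

variable {𝕜 E F : Type*} [RCLike 𝕜] [NormedAddCommGroup E] [InnerProductSpace 𝕜 E]
  [NormedAddCommGroup F] [InnerProductSpace 𝕜 F]

theorem cauchySeq_of_norm_eq_of_tendsto_re_inner {v : ℕ → E} {r : ℝ} (hv : ∀ n, ‖v n‖ = r)
    (h : Tendsto (fun p : ℕ × ℕ => RCLike.re ⟪v p.1, v p.2⟫_𝕜) (atTop ×ˢ atTop) (𝓝 (r ^ 2))) :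
    CauchySeq v := by
  have hsq : Tendsto (fun p : ℕ × ℕ => ‖v p.1 - v p.2‖ ^ 2) (atTop ×ˢ atTop) (𝓝 0) := by
    have := (tendsto_const_nhds (x := r ^ 2)).sub ((tendsto_const_nhds (x := (2 : ℝ))).mul h)
      |>.add (tendsto_const_nhds (x := r ^ 2))
    rw [show r ^ 2 - 2 * r ^ 2 + r ^ 2 = 0 by ring] at this
    refine this.congr fun p => ?_
    rw [@norm_sub_sq 𝕜, hv, hv]
  rw [cauchySeq_iff_tendsto_dist_atTop_0, ← prod_atTop_atTop_eq]
  simpa [dist_eq_norm, Real.sqrt_sq (norm_nonneg _)] using hsq.sqrt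

variable [CompleteSpace E] [CompleteSpace F]

theorem ContinuousLinearMap.exists_tendsto_apply_of_cauchySeq
    {V : ℕ → E →L[𝕜] F} (hV : ∀ x, CauchySeq fun n => V n x) :
    ∃ A : E →L[𝕜] F, ∀ x, Tendsto (fun n => V n x) atTop (𝓝 (A x)) := by
  choose f hf using fun x => cauchySeq_tendsto_of_complete (hV x)
  exact ⟨continuousLinearMapOfTendsto V (tendsto_pi_nhds.mpr hf), hf⟩

theorem ContinuousLinearMap.adjoint_eq_of_tendsto
    {ι : Type*} {l : Filter ι} [l.NeBot] {V : ι → E →L[𝕜] F} {A : E →L[𝕜] F} {B : F →L[𝕜] E}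
    (hA : ∀ x, Tendsto (fun i => V i x) l (𝓝 (A x)))
    (hB : ∀ y, Tendsto (fun i => adjoint (V i) y) l (𝓝 (B y))) :
    adjoint A = B := by
  refine ((eq_adjoint_iff B A).mpr fun y x => ?_).symm
  refine tendsto_nhds_unique ((hB y).inner tendsto_const_nhds) ?_
  simpa only [adjoint_inner_left] using tendsto_const_nhds.inner (hA x)

theorem ContinuousLinearMap.mem_unitary_of_norm_map {A : E →L[𝕜] E}
    (hA : ∀ x, ‖A x‖ = ‖x‖) (hA' : ∀ x, ‖adjoint A x‖ = ‖x‖) : A ∈ unitary (E →L[𝕜] E) := by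
  rw [norm_map_iff_adjoint_comp_self] at hA hA'
  rw [adjoint_adjoint] at hA'
  exact Unitary.mem_iff.mpr ⟨hA, hA'⟩

theorem ContinuousLinearMap.exists_tendsto_apply_of_tendsto_inner_adjoint_comp
    {V : ℕ → E →L[𝕜] F} (hV : ∀ n x, ‖V n x‖ = ‖x‖) {D : Set E} (hD : Dense D)
    (h : ∀ ψ ∈ D, Tendsto (fun p : ℕ × ℕ => ⟪ψ, ψ - adjoint (V p.1) (V p.2 ψ)⟫_𝕜)
      (atTop ×ˢ atTop) (𝓝 0)) :
    ∃ A : E →L[𝕜] F, (∀ x, ‖A x‖ = ‖x‖) ∧ ∀ x, Tendsto (fun n => V n x) atTop (𝓝 (A x)) := by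
  have hCD : ∀ ψ ∈ D, CauchySeq fun n => V n ψ := fun ψ hψ => by
    refine cauchySeq_of_norm_eq_of_tendsto_re_inner (𝕜 := 𝕜) (hV · ψ) ?_
    have := (RCLike.continuous_re.tendsto _).comp
      ((tendsto_const_nhds (x := ⟪ψ, ψ⟫_𝕜)).sub (h ψ hψ))
    rw [sub_zero, Function.comp_def, @inner_self_eq_norm_sq 𝕜] at this
    refine this.congr fun p => ?_
    rw [inner_sub_right, adjoint_inner_right, sub_sub_cancel]
  have hLip : ∀ n, LipschitzWith 1 (V n) := fun n =>
    (AddMonoidHomClass.isometry_of_norm (V n) (hV n)).lipschitz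
  obtain ⟨A, hA⟩ := exists_tendsto_apply_of_cauchySeq (cauchySeq_apply_of_dense hLip hD hCD)
  exact ⟨A, fun x => tendsto_nhds_unique (hA x).norm (by simp only [hV, tendsto_const_nhds]), hA⟩

end InnerProductSpace

theorem stmt_0 {H : Type*} [NormedAddCommGroup H] [InnerProductSpace ℂ H] [CompleteSpace H]
    (D : Set H) (hD : Dense D) (U : ℕ → H →L[ℂ] H)
    (hU : ∀ n, U n ∈ unitary (H →L[ℂ] H))
    (h1 : ∀ φ ∈ D, ∀ ψ ∈ D,
      Tendsto (fun p : ℕ × ℕ =>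
          (inner ℂ φ (ψ - (ContinuousLinearMap.adjoint (U p.1)) ((U p.2) ψ)) : ℂ))
        (atTop ×ˢ atTop) (nhds 0))
    (h2 : ∀ φ ∈ D, ∀ ψ ∈ D,
      Tendsto (fun p : ℕ × ℕ =>
          (inner ℂ φ (ψ - (U p.1) ((ContinuousLinearMap.adjoint (U p.2)) ψ)) : ℂ))
        (atTop ×ˢ atTop) (nhds 0)) :
    ∃ U₀ : H →L[ℂ] H, U₀ ∈ unitary (H →L[ℂ] H) ∧
      ∀ ψ : H, Tendsto (fun n => (U n) ψ) atTop (nhds (U₀ ψ)) := by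
  obtain ⟨A, hAiso, hA⟩ := exists_tendsto_apply_of_tendsto_inner_adjoint_comp
    (fun n => norm_map_of_mem_unitary (hU n)) hD fun ψ hψ => h1 ψ hψ ψ hψ
  obtain ⟨B, hBiso, hB⟩ := exists_tendsto_apply_of_tendsto_inner_adjoint_comp
    (V := fun n => adjoint (U n)) (fun n => norm_map_of_mem_unitary (Unitary.star_mem (hU n))) hD
    fun ψ hψ => by simpa only [adjoint_adjoint] using h2 ψ hψ ψ hψ
  obtain rfl := adjoint_eq_of_tendsto hA hB
  exact ⟨A, mem_unitary_of_norm_map hAiso hBiso, hA⟩
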